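/- arXiv:math/0508471 — 2 statements merged into one kernel-verified Lean document; each statement's English description precedes it below -/
import Mathlib

section
/- For any proper ideal I of R^Λ with Λ a set, the ideal associated to the filter F_I = { Z(x) : x ∈ I } recovers I; that is, { y : Λ → ℝ | Z(y) ∈ F_I } = I. -/
open Set Filter Function

/-- zero set of a function -/
def Z {Λ : Type*} (x : Λ → ℝ) : Set Λ := {l | x l = 0}

/-- the ideal of R^Λ associated to a filter. -/
def Ifil {Λ : Type*} (F : Filter Λ) : Ideal (Λ → ℝ) where
  carrier := {x | Z x ∈ F}
  add_mem' := by
    intro a b ha hb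
    refine Filter.mem_of_superset (Filter.inter_mem ha hb) ?_
    rintro l ⟨h1, h2⟩
    simp only [Z, Set.mem_setOf_eq] at *
    simp [h1, h2]
  zero_mem' := by
    have : Z (0 : Λ → ℝ) = Set.univ := by ext l; simp [Z]
    simp [Set.mem_setOf_eq, this]
  smul_mem' := by
    intro c x hx
    refine Filter.mem_of_superset hx ?_
    intro l hl
    simp only [Z, Set.mem_setOf_eq] at *
    simp [hl]


/-- For any proper ideal I of R^Λ, the ideal associated to the filter
F_I = { Z(x) : x ∈ I } recovers I: { y | Z(y) ∈ F_I } = I. -/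
theorem stmt4 {Λ : Type*} (I : Ideal (Λ → ℝ)) (hI : I ≠ ⊤) :
    {y : Λ → ℝ | ∃ x ∈ I, Z y = Z x} = (I : Set (Λ → ℝ)) := by
  ext y
  simp only [Set.mem_setOf_eq, SetLike.mem_coe]
  constructor
  · rintro ⟨x, hx, hZ⟩
    have hy : y = (fun l => if x l = 0 then 0 else y l / x l) * x := by
      funext l
      by_cases h : x l = 0
      · have : y l = 0 := by
          have : l ∈ Z y := by rw [hZ]; exact h
          exact this
        simp [h, this]
      · simp [h]
    rw [hy]
    exact I.mul_mem_left _ hx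
  · intro hy
    exact ⟨y, hy, rfl⟩
end

section
/- The correspondences I ↦ F_I (a proper ideal of R^Λ to the filter of zero sets of its elements) and F ↦ I_F (a proper filter on Λ to the ideal of functions whose zero set belongs to F) are mutually inverse order-preserving bijections between the proper ideals of R^Λ and the proper filters on Λ. -/
open Set Filter Function

/-- the collection of zero sets of elements of an ideal of R^Λ -/
def Fof {Λ : Type*} (I : Ideal (Λ → ℝ)) : Set (Set Λ) := {s | ∃ x ∈ I, s = Z x}

/-!
In `ℝ^Λ` a function `x` divides every `y` vanishing wherever `x` does (`y = x * (y / x)`, with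
`0 / 0 = 0`), so membership in an ideal depends only on the zero set, and the zero sets of an
ideal are upward closed; since every set is the zero set of an indicator function, `I_F` recovers
`F` and `F_I` recovers `I`. Zero sets are closed under intersection because
`Z (x * x + y * y) = Z x ∩ Z y`, and a function with empty zero set is a unit.
-/

section ZeroSets

variable {Λ : Type*}

lemma Z_one : Z (1 : Λ → ℝ) = ∅ := by
  ext l; simp [Z]

lemma Z_zero : Z (0 : Λ → ℝ) = univ := by
  ext l; simp [Z]

lemma Z_indicator_compl_one (s : Set Λ) : Z (sᶜ.indicator 1) = s := by
  ext l
  by_cases hl : l ∈ s <;> simp [Z, hl]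

lemma Z_mul_self_add_mul_self (x y : Λ → ℝ) : Z (x * x + y * y) = Z x ∩ Z y := by
  ext l
  simp only [Z, mem_inter_iff, mem_ofPred_eq, Pi.add_apply, Pi.mul_apply]
  rw [add_eq_zero_iff_of_nonneg (mul_self_nonneg _) (mul_self_nonneg _), mul_self_eq_zero,
    mul_self_eq_zero]

lemma eq_mul_div_of_Z_subset_Z {x y : Λ → ℝ} (h : Z x ⊆ Z y) : y = x * (y / x) := by
  funext l
  by_cases hx : x l = 0
  · have hy : y l = 0 := h hx
    simp [hx, hy]
  · simp [mul_div_cancel₀ _ hx]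

lemma mem_of_Z_subset_Z {I : Ideal (Λ → ℝ)} {x y : Λ → ℝ} (hx : x ∈ I) (h : Z x ⊆ Z y) :
    y ∈ I :=
  eq_mul_div_of_Z_subset_Z h ▸ I.mul_mem_right _ hx

lemma eq_top_of_Z_eq_empty {I : Ideal (Λ → ℝ)} {x : Λ → ℝ} (hx : x ∈ I) (h : Z x = ∅) :
    I = ⊤ :=
  (Ideal.eq_top_iff_one I).2 <| mem_of_Z_subset_Z hx (h ▸ empty_subset _)

lemma mem_Fof_iff {I : Ideal (Λ → ℝ)} {s : Set Λ} : s ∈ Fof I ↔ sᶜ.indicator 1 ∈ I := by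
  constructor
  · rintro ⟨x, hx, rfl⟩
    exact mem_of_Z_subset_Z hx (Z_indicator_compl_one _).superset
  · intro h
    exact ⟨_, h, (Z_indicator_compl_one s).symm⟩

lemma Z_mem_Fof_iff {I : Ideal (Λ → ℝ)} {y : Λ → ℝ} : Z y ∈ Fof I ↔ y ∈ I := by
  refine ⟨?_, fun hy => ⟨y, hy, rfl⟩⟩
  rintro ⟨x, hx, hZ⟩
  exact mem_of_Z_subset_Z hx hZ.superset

def zeroSetFilter (I : Ideal (Λ → ℝ)) : Filter Λ where
  sets := Fof I
  univ_sets := ⟨0, I.zero_mem, Z_zero.symm⟩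
  sets_of_superset := by
    rintro s t ⟨x, hx, rfl⟩ hst
    exact mem_Fof_iff.2 <| mem_of_Z_subset_Z hx <| (Z_indicator_compl_one t).symm ▸ hst
  inter_sets := by
    rintro s t ⟨x, hx, rfl⟩ ⟨y, hy, rfl⟩
    exact ⟨x * x + y * y, I.add_mem (I.mul_mem_right _ hx) (I.mul_mem_right _ hy),
      (Z_mul_self_add_mul_self x y).symm⟩

lemma empty_notMem_zeroSetFilter {I : Ideal (Λ → ℝ)} (hI : I ≠ ⊤) :
    (∅ : Set Λ) ∉ zeroSetFilter I := by
  rintro ⟨x, hx, hZ⟩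
  exact hI (eq_top_of_Z_eq_empty hx hZ.symm)

lemma Ifil_ne_top {F : Filter Λ} (hF : (∅ : Set Λ) ∉ F) : Ifil F ≠ ⊤ := by
  intro htop
  have h1 : Z (1 : Λ → ℝ) ∈ F := (htop ▸ Submodule.mem_top : (1 : Λ → ℝ) ∈ Ifil F)
  exact hF (Z_one ▸ h1)

lemma Fof_mono {I J : Ideal (Λ → ℝ)} (hIJ : (I : Set (Λ → ℝ)) ⊆ J) : Fof I ⊆ Fof J := by
  rintro s ⟨x, hx, rfl⟩
  exact ⟨x, hIJ hx, rfl⟩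

lemma Fof_Ifil (F : Filter Λ) : Fof (Ifil F) = F.sets := by
  ext s
  rw [mem_Fof_iff]
  show Z _ ∈ F ↔ s ∈ F
  rw [Z_indicator_compl_one]

end ZeroSets

/-- The correspondences I ↦ F_I and F ↦ I_F are mutually inverse order-preserving
bijections between proper ideals of R^Λ and proper filters on Λ: each proper ideal
gives a proper filter, each proper filter gives a proper ideal, both maps preserve
inclusion, and they are mutually inverse. -/
theorem stmt5 {Λ : Type*} :
    (∀ I : Ideal (Λ → ℝ), I ≠ ⊤ → ∃ F : Filter Λ, (∅ : Set Λ) ∉ F ∧ F.sets = Fof I) ∧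
    (∀ F : Filter Λ, (∅ : Set Λ) ∉ F → Ifil F ≠ ⊤) ∧
    (∀ I J : Ideal (Λ → ℝ), I ≠ ⊤ → J ≠ ⊤ →
      ((I : Set (Λ → ℝ)) ⊆ J → Fof I ⊆ Fof J)) ∧
    (∀ F G : Filter Λ, (∅ : Set Λ) ∉ F → (∅ : Set Λ) ∉ G → F.sets ⊆ G.sets →
      ((Ifil F : Ideal (Λ → ℝ)) : Set (Λ → ℝ)) ⊆ (Ifil G : Ideal (Λ → ℝ))) ∧
    (∀ I : Ideal (Λ → ℝ), I ≠ ⊤ → {y : Λ → ℝ | Z y ∈ Fof I} = (I : Set (Λ → ℝ))) ∧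
    (∀ F : Filter Λ, (∅ : Set Λ) ∉ F → Fof (Ifil F) = F.sets) :=
  ⟨fun _ hI => ⟨zeroSetFilter _, empty_notMem_zeroSetFilter hI, rfl⟩,
    fun _ hF => Ifil_ne_top hF,
    fun _ _ _ _ hIJ => Fof_mono hIJ,
    fun _ _ _ _ hFG _ hx => hFG hx,
    fun _ _ => Set.ext fun _ => Z_mem_Fof_iff,
    fun F _ => Fof_Ifil F⟩
end
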